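/- For the Cross model viscosity ν, the function s ↦ ν(s)·s is strictly increasing on [0,∞) provided r > 1. (Indeed its derivative is bounded below by a positive constant times ν_∞ wherever differentiable.) -/

import Mathlib

/-!
Write `ν(s) s = ν∞ s + (ν₀ - ν∞) · s / (1 + K s^p)` with `p = 2 - r ≤ 1`. The first summand is
strictly increasing and the second nondecreasing: after clearing denominators, `s / (1 + K s^p)`
being monotone reduces to `a b^p ≤ b a^p` for `a ≤ b`, i.e. to `a^(1-p) ≤ b^(1-p)`.
-/

open Set

lemma Real.mul_rpow_le_mul_rpow {a b p : ℝ} (ha : 0 ≤ a) (hab : a ≤ b) (hp : p ≤ 1) :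
    a * b ^ p ≤ b * a ^ p := by
  rcases ha.eq_or_lt with rfl | ha
  · simpa using mul_nonneg (ha.trans hab) (Real.rpow_nonneg le_rfl p)
  have hb : 0 < b := ha.trans_le hab
  have hpow : a ^ (1 - p) ≤ b ^ (1 - p) := Real.rpow_le_rpow ha.le hab (by linarith)
  calc a * b ^ p = a ^ (1 - p) * (a ^ p * b ^ p) := by
        rw [← mul_assoc, ← Real.rpow_add ha]; simp
    _ ≤ b ^ (1 - p) * (a ^ p * b ^ p) := by gcongr
    _ = b * a ^ p := by
        rw [mul_left_comm, ← Real.rpow_add hb]; simp [mul_comm]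

lemma monotoneOn_div_one_add_mul_rpow {K p : ℝ} (hK : 0 ≤ K) (hp : p ≤ 1) :
    MonotoneOn (fun s : ℝ => s / (1 + K * s ^ p)) (Ici 0) := by
  intro a (ha : 0 ≤ a) b (hb : 0 ≤ b) hab
  rw [div_le_div_iff₀ (by positivity) (by positivity)]
  have := mul_le_mul_of_nonneg_left (Real.mul_rpow_le_mul_rpow ha hab hp) hK
  linarith

theorem cross_viscosity_mul_strictMono_general (ν0 νinf K r : ℝ)
    (hνinf : 0 < νinf) (hν : νinf ≤ ν0) (hK : 0 < K) (hr1 : 1 < r) :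
    StrictMonoOn (fun s : ℝ => (νinf + (ν0 - νinf) / (1 + K * s ^ (2 - r))) * s)
      (Set.Ici (0 : ℝ)) := by
  have hsplit : (fun s : ℝ => (νinf + (ν0 - νinf) / (1 + K * s ^ (2 - r))) * s) =
      fun s => νinf * s + (ν0 - νinf) * (s / (1 + K * s ^ (2 - r))) := by
    funext s; ring
  rw [hsplit]
  exact ((strictMono_mul_left_of_pos hνinf).strictMonoOn _).add_monotone
    ((monotone_mul_left_of_nonneg (sub_nonneg.2 hν)).comp_monotoneOn
      (monotoneOn_div_one_add_mul_rpow hK.le (by linarith)))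

/-- The map s ↦ ν(s)·s is strictly increasing on [0,∞) for the Cross model viscosity. -/
theorem cross_viscosity_mul_strictMono (ν0 νinf K r : ℝ)
    (hνinf : 0 < νinf) (hν : νinf ≤ ν0) (hK : 0 < K) (hr1 : 1 < r) (hr2 : r < 2) :
    StrictMonoOn (fun s : ℝ => (νinf + (ν0 - νinf) / (1 + K * s ^ (2 - r))) * s)
      (Set.Ici (0 : ℝ)) :=
  cross_viscosity_mul_strictMono_general ν0 νinf K r hνinf hν hK hr1
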